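/- arXiv:2207.05735 — 2 statements merged into one kernel-verified Lean document; each statement's English description precedes it below -/
import Mathlib

section
/- Let q, m be positive integers with q ≥ 2, and let h be a prime dividing q^m. A map f: ℤ_q^m → ℤ_h is a generalized bent function if and only if R = {(f(x), x) : x ∈ ℤ_q^m} is a splitting (q^m, h, q^m, q^m/h)-relative difference set in ℤ_h × ℤ_q^m relative to the forbidden subgroup ℤ_h × {0}. -/
open scoped BigOperators

noncomputable section

/-- `zeta k` is the complex `k`-th root of unity `exp(2π√-1/k)`. -/
def zeta (k : ℕ) : ℂ := Complex.exp (2 * Real.pi * Complex.I / k)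

/-- Standard dot product of tuples, computed with representatives in `{0,…,q-1}`. -/
def dotv {m q : ℕ} (u v : Fin m → ZMod q) : ℕ := ∑ i, (u i).val * (v i).val

/-- The "Walsh" sum `Σ_{x ∈ ℤ_q^m} ζ_h^{f(x)} ζ_q^{-w·x}`. -/
def WS (q h : ℕ) {m : ℕ} [NeZero q] (f : (Fin m → ZMod q) → ZMod h)
    (w : Fin m → ZMod q) : ℂ :=
  ∑ x : Fin m → ZMod q, zeta h ^ (f x).val * zeta q ^ (-(dotv w x : ℤ))

/-- `f : ℤ_q^m → ℤ_h` is a generalized bent function (GBF). -/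
def IsGBF (q h : ℕ) {m : ℕ} [NeZero q] (f : (Fin m → ZMod q) → ZMod h) : Prop :=
  ∀ w : Fin m → ZMod q, (‖WS q h f w‖) ^ 2 = (q : ℝ) ^ m

/-- `R` is a `(v,n,k,λ)`-relative difference set in the additive group `E`
relative to the (forbidden) subgroup `N`: a `k`-subset of a transversal for `N`
such that every `x ∈ E ∖ N` has exactly `λ` representations `x = r - r'` with
`r, r' ∈ R` (and no nonzero element of `N` has such a representation). -/
def IsAddRDS {E : Type*} [AddGroup E] (N : AddSubgroup E) (R : Set E)
    (v n k l : ℕ) : Prop :=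
  N.index = v ∧ Nat.card N = n ∧ Nat.card R = k ∧
    (∀ r ∈ R, ∀ r' ∈ R, r - r' ∈ N → r = r') ∧
    ∀ x : E, x ∉ N → Nat.card {p : R × R // (p.1 : E) - (p.2 : E) = x} = l


open Finset

/-!
Write `ψ` for the standard character `a ↦ ζ_h^a` of `ℤ_h`. The squared modulus of the Walsh sum
at `w` is the Fourier transform at `w` of the autocorrelation `C(b) = Σ_x ψ(f(x+b) - f(x))`, so by
Fourier inversion on `ℤ_q^m` the map `f` is bent iff `C(b) = 0` for every `b ≠ 0`. Grouping terms,
`C(b) = Σ_a N_b(a) ψ(a)` where `N_b(a)` counts the `x` with `f(x+b) - f(x) = a`; as `h` is prime,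
the `h`-th cyclotomic polynomial is irreducible, so such a rational relation among the powers of
`ζ_h` vanishes iff `N_b` is constant, i.e. `N_b ≡ q^m/h`. Finally `N_b(a)` is the number of ways
to write `(a, b)` as a difference of two points of the graph `R`, which is a transversal of
`ℤ_h × {0}`, and that subgroup has the complement `{0} × ℤ_q^m`.
-/

theorem zeta_zpow_eq_stdAddChar (N : ℕ) [NeZero N] (n : ℤ) :
    zeta N ^ n = ZMod.stdAddChar (n : ZMod N) := by
  rw [ZMod.stdAddChar_coe, zeta, ← Complex.exp_int_mul]
  ring_nf

theorem zeta_pow_eq_stdAddChar (N : ℕ) [NeZero N] (n : ℕ) :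
    zeta N ^ n = ZMod.stdAddChar (n : ZMod N) := by
  exact_mod_cast zeta_zpow_eq_stdAddChar N n

theorem isPrimitiveRoot_zeta (N : ℕ) [NeZero N] : IsPrimitiveRoot (zeta N) N :=
  Complex.isPrimitiveRoot_exp N (NeZero.ne N)

open Fin.CommRing in
theorem ZMod.sum_mul_stdAddChar_eq_zero_iff {p : ℕ} [Fact p.Prime] (c : ZMod p → ℚ) :
    ∑ a, (c a : ℂ) * ZMod.stdAddChar a = 0 ↔ ∀ a b, c a = c b := by
  have hp : p.Prime := Fact.out
  let e := (ZMod.finEquiv p).toEquiv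
  have he (i : Fin p) : ZMod.stdAddChar (e i) = zeta p ^ i.val := by
    rw [zeta_pow_eq_stdAddChar, ← map_natCast (ZMod.finEquiv p), Fin.cast_val_eq_self]
    rfl
  simp_rw [← e.sum_comp, ← e.forall_congr_right, he]
  exact IsPrimitiveRoot.sum_eq_zero_iff_forall_eq hp (isPrimitiveRoot_zeta p) (c ∘ e)

section Autocorrelation

variable {G : Type*} [AddCommGroup G] [Fintype G] {h : ℕ}

def diffCount (f : G → ZMod h) (b : G) (a : ZMod h) : ℕ :=
  #{x | f (x + b) - f x = a}

theorem natCard_eq_diffCount (f : G → ZMod h) (b : G) (a : ZMod h) :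
    Nat.card {x // f (x + b) - f x = a} = diffCount f b a := by
  rw [Nat.card_eq_fintype_card, Fintype.card_subtype, diffCount]

variable [NeZero h]

def autocorrelation (f : G → ZMod h) (b : G) : ℂ :=
  ∑ x, ZMod.stdAddChar (f (x + b) - f x)

theorem norm_sum_stdAddChar_mul_sq (f : G → ZMod h) (χ : AddChar G ℂ) :
    ((‖∑ x, ZMod.stdAddChar (f x) * χ (-x)‖ ^ 2 : ℝ) : ℂ) =
      ∑ b, autocorrelation f b * χ (-b) := by
  push_cast
  rw [← Complex.mul_conj', map_sum, sum_mul_sum, sum_comm]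
  calc ∑ y, ∑ x, ZMod.stdAddChar (f x) * χ (-x) *
          starRingEnd ℂ (ZMod.stdAddChar (f y) * χ (-y))
      = ∑ y, ∑ b, ZMod.stdAddChar (f (y + b) - f y) * χ (-b) := by
        refine sum_congr rfl fun y _ => (Fintype.sum_equiv (Equiv.addLeft y) _ _ fun b => ?_).symm
        simp only [Equiv.coe_addLeft, map_mul, ← AddChar.map_neg_eq_conj, neg_neg]
        rw [mul_mul_mul_comm, ← AddChar.map_add_eq_mul, ← AddChar.map_add_eq_mul]
        congr 2 <;> abel
    _ = ∑ b, autocorrelation f b * χ (-b) := by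
        rw [sum_comm]
        simp only [autocorrelation, sum_mul]

theorem autocorrelation_zero (f : G → ZMod h) : autocorrelation f 0 = Fintype.card G := by
  simp [autocorrelation]

theorem autocorrelation_eq_sum_diffCount (f : G → ZMod h) (b : G) :
    autocorrelation f b = ∑ a, (diffCount f b a : ℂ) * ZMod.stdAddChar a := by
  rw [autocorrelation, ← sum_fiberwise' univ (fun x => f (x + b) - f x) ZMod.stdAddChar]
  simp only [diffCount, sum_const, nsmul_eq_mul]

theorem sum_diffCount (f : G → ZMod h) (b : G) : ∑ a, diffCount f b a = Fintype.card G :=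
  (card_eq_sum_card_fiberwise fun x _ => mem_univ (f (x + b) - f x)).symm

theorem autocorrelation_eq_zero_iff (hp : h.Prime) (f : G → ZMod h) (b : G) :
    autocorrelation f b = 0 ↔ ∀ a, diffCount f b a = Fintype.card G / h := by
  have : Fact h.Prime := ⟨hp⟩
  have hchar := ZMod.sum_mul_stdAddChar_eq_zero_iff (fun a => (diffCount f b a : ℚ))
  simp only [Rat.cast_natCast, Nat.cast_inj] at hchar
  rw [autocorrelation_eq_sum_diffCount, hchar]
  constructor
  · intro hconst a
    rw [← sum_diffCount f b, sum_congr rfl fun a' _ => hconst a' a, sum_const, card_univ,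
      ZMod.card, smul_eq_mul, Nat.mul_div_cancel_left _ hp.pos]
  · intro hcount a a'
    rw [hcount a, hcount a']

end Autocorrelation

section DotChar

variable {q m : ℕ} [NeZero q]

def dotChar (w : Fin m → ZMod q) : AddChar (Fin m → ZMod q) ℂ :=
  ZMod.stdAddChar.compAddMonoidHom (AddMonoidHom.mk' (w ⬝ᵥ ·) (dotProduct_add w))

theorem dotChar_apply (w x : Fin m → ZMod q) : dotChar w x = ZMod.stdAddChar (w ⬝ᵥ x) := rfl

theorem dotChar_comm (w x : Fin m → ZMod q) : dotChar w x = dotChar x w := by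
  rw [dotChar_apply, dotChar_apply, dotProduct_comm]

theorem dotChar_eq_zero_iff (v : Fin m → ZMod q) : dotChar v = 0 ↔ v = 0 := by
  refine ⟨fun hv => funext fun i => ZMod.injective_stdAddChar ?_, fun hv => ?_⟩
  · simpa [dotChar_apply] using DFunLike.congr_fun hv (Pi.single i 1)
  · ext x
    simp [dotChar_apply, hv]

theorem sum_dotChar (v : Fin m → ZMod q) :
    ∑ w, dotChar w v = if v = 0 then (q : ℂ) ^ m else 0 := by
  simp_rw [dotChar_comm _ v]
  rw [AddChar.sum_eq_ite]
  simp [dotChar_eq_zero_iff, ZMod.card]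

theorem dotChar_fourier_inversion (g : (Fin m → ZMod q) → ℂ) (v : Fin m → ZMod q) :
    ∑ w, (∑ b, g b * dotChar w (-b)) * dotChar w v = (q : ℂ) ^ m * g v := by
  calc ∑ w, (∑ b, g b * dotChar w (-b)) * dotChar w v
      = ∑ b, g b * ∑ w, dotChar w (v - b) := by
        simp_rw [sum_mul, mul_sum]
        rw [sum_comm]
        simp_rw [mul_assoc, ← AddChar.map_add_eq_mul, neg_add_eq_sub]
    _ = (q : ℂ) ^ m * g v := by
        simp only [sum_dotChar, sub_eq_zero, mul_ite, mul_zero, sum_ite_eq, mem_univ, if_true]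
        ring

theorem forall_sum_mul_dotChar_neg_eq_iff (g : (Fin m → ZMod q) → ℂ) (c : ℂ) :
    (∀ w, ∑ b, g b * dotChar w (-b) = c) ↔ g 0 = c ∧ ∀ b ≠ 0, g b = 0 := by
  constructor
  · intro hconst
    have hg (v : Fin m → ZMod q) : (q : ℂ) ^ m * g v = (q : ℂ) ^ m * if v = 0 then c else 0 := by
      rw [← dotChar_fourier_inversion]
      simp_rw [hconst, ← mul_sum, sum_dotChar]
      split_ifs <;> ring
    have hq : (q : ℂ) ^ m ≠ 0 := pow_ne_zero _ (Nat.cast_ne_zero.2 (NeZero.ne q))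
    have hsupp (v : Fin m → ZMod q) := mul_left_cancel₀ hq (hg v)
    exact ⟨by simpa using hsupp 0, fun b hb => by simpa [hb] using hsupp b⟩
  · rintro ⟨hzero, hsupp⟩ w
    rw [sum_eq_single 0 (fun b _ hb => by rw [hsupp b hb, zero_mul]) (by simp)]
    simp [hzero]

end DotChar

section GBF

variable {q m h : ℕ} [NeZero q] [NeZero h]

theorem natCast_dotv (w x : Fin m → ZMod q) : (dotv w x : ZMod q) = w ⬝ᵥ x := by
  simp [dotv, dotProduct]

theorem WS_eq_sum_stdAddChar (f : (Fin m → ZMod q) → ZMod h) (w : Fin m → ZMod q) :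
    WS q h f w = ∑ x, ZMod.stdAddChar (f x) * dotChar w (-x) := by
  refine sum_congr rfl fun x _ => ?_
  rw [zeta_pow_eq_stdAddChar, ZMod.natCast_zmod_val, zeta_zpow_eq_stdAddChar, dotChar_apply,
    dotProduct_neg]
  push_cast
  rw [natCast_dotv]

theorem isGBF_iff_autocorrelation_eq_zero (f : (Fin m → ZMod q) → ZMod h) :
    IsGBF q h f ↔ ∀ b ≠ 0, autocorrelation f b = 0 := by
  have hnorm (w : Fin m → ZMod q) : ‖WS q h f w‖ ^ 2 = (q : ℝ) ^ m ↔
      ∑ b, autocorrelation f b * dotChar w (-b) = (q : ℂ) ^ m := by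
    rw [WS_eq_sum_stdAddChar, ← norm_sum_stdAddChar_mul_sq]
    exact_mod_cast Iff.rfl
  simp only [IsGBF, hnorm, forall_sum_mul_dotChar_neg_eq_iff, autocorrelation_zero, ZMod.card,
    Fintype.card_pi, prod_const, card_univ, Fintype.card_fin, Nat.cast_pow, true_and]

theorem isGBF_iff_diffCount_eq (hp : h.Prime) (f : (Fin m → ZMod q) → ZMod h) :
    IsGBF q h f ↔ ∀ b ≠ 0, ∀ a, diffCount f b a = q ^ m / h := by
  simp only [isGBF_iff_autocorrelation_eq_zero, autocorrelation_eq_zero_iff hp, ZMod.card,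
    Fintype.card_pi, prod_const, card_univ, Fintype.card_fin]

end GBF

section Graph

variable {A G : Type*} [AddCommGroup A] [AddCommGroup G]

theorem mem_prod_top_bot_iff (y : A × G) :
    y ∈ (⊤ : AddSubgroup A).prod (⊥ : AddSubgroup G) ↔ y.2 = 0 := by
  simp [AddSubgroup.mem_prod]

theorem isCompl_prod_top_bot :
    IsCompl ((⊤ : AddSubgroup A).prod (⊥ : AddSubgroup G)) ((⊥ : AddSubgroup A).prod ⊤) := by
  constructor
  · rw [AddSubgroup.disjoint_def]
    rintro ⟨a, g⟩ h₁ h₂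
    simp_all [AddSubgroup.mem_prod]
  · rw [codisjoint_iff_le_sup]
    rintro ⟨a, g⟩ -
    rw [show ((a, g) : A × G) = (a, 0) + (0, g) by simp]
    exact add_mem (AddSubgroup.mem_sup_left (by simp [AddSubgroup.mem_prod]))
      (AddSubgroup.mem_sup_right (by simp [AddSubgroup.mem_prod]))

theorem card_graph_sub_eq (f : G → A) (a : A) (b : G) :
    Nat.card {p : (Set.range fun x => (f x, x)) × (Set.range fun x => (f x, x)) //
        (p.1 : A × G) - p.2 = (a, b)} = Nat.card {y // f (y + b) - f y = a} := by
  let φ (y : {y // f (y + b) - f y = a}) :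
      {p : (Set.range fun x => (f x, x)) × (Set.range fun x => (f x, x)) //
        (p.1 : A × G) - p.2 = (a, b)} :=
    ⟨(⟨_, y.1 + b, rfl⟩, ⟨_, y.1, rfl⟩), by simp [y.2]⟩
  refine (Nat.card_congr (Equiv.ofBijective φ ⟨fun y y' hyy' => ?_, ?_⟩)).symm
  · exact Subtype.ext (congrArg (fun p => (p.1.2 : A × G).2) hyy')
  · rintro ⟨⟨⟨_, x, rfl⟩, ⟨_, y, rfl⟩⟩, hxy⟩
    obtain ⟨hfxy, hxy⟩ := Prod.ext_iff.1 hxy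
    obtain rfl : x = y + b := sub_eq_iff_eq_add'.1 hxy
    exact ⟨⟨y, hfxy⟩, rfl⟩

theorem isAddRDS_graph_iff (f : G → A) (v n k l : ℕ) :
    IsAddRDS ((⊤ : AddSubgroup A).prod (⊥ : AddSubgroup G)) (Set.range fun x => (f x, x))
        v n k l ↔
      Nat.card G = v ∧ Nat.card A = n ∧ Nat.card G = k ∧
        ∀ b ≠ 0, ∀ a, Nat.card {y // f (y + b) - f y = a} = l := by
  have hindex : ((⊤ : AddSubgroup A).prod (⊥ : AddSubgroup G)).index = Nat.card G := by
    rw [AddSubgroup.index_prod, AddSubgroup.index_top, AddSubgroup.index_bot, one_mul]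
  have hcardN : Nat.card ((⊤ : AddSubgroup A).prod (⊥ : AddSubgroup G)) = Nat.card A := by
    rw [Nat.card_congr (AddSubgroup.prodEquiv _ _).toEquiv, Nat.card_prod, AddSubgroup.card_top,
      AddSubgroup.card_bot, mul_one]
  have hcardR : Nat.card (Set.range fun x => (f x, x)) = Nat.card G :=
    Nat.card_range_of_injective fun x y hxy => congrArg Prod.snd hxy
  have htransversal : ∀ r ∈ Set.range (fun x => (f x, x)), ∀ r' ∈ Set.range (fun x => (f x, x)),
      r - r' ∈ (⊤ : AddSubgroup A).prod (⊥ : AddSubgroup G) → r = r' := by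
    rintro _ ⟨x, rfl⟩ _ ⟨y, rfl⟩ hxy
    obtain rfl : x = y := sub_eq_zero.1 ((mem_prod_top_bot_iff _).1 hxy)
    rfl
  have hcount : (∀ x ∉ (⊤ : AddSubgroup A).prod (⊥ : AddSubgroup G),
      Nat.card {p : (Set.range fun x => (f x, x)) × (Set.range fun x => (f x, x)) //
        (p.1 : A × G) - p.2 = x} = l) ↔
      ∀ b ≠ 0, ∀ a, Nat.card {y // f (y + b) - f y = a} = l := by
    simp only [Prod.forall, mem_prod_top_bot_iff, card_graph_sub_eq]
    exact ⟨fun H b hb a => H a b hb, fun H a b hb => H b hb a⟩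
  rw [IsAddRDS, hindex, hcardN, hcardR, hcount, and_iff_right htransversal]

end Graph

theorem isGBF_iff_splitting_RDS_general
    (q m h : ℕ) [NeZero q]
    (hp : Nat.Prime h)
    (f : (Fin m → ZMod q) → ZMod h) :
    IsGBF q h f ↔
      (IsAddRDS ((⊤ : AddSubgroup (ZMod h)).prod (⊥ : AddSubgroup (Fin m → ZMod q)))
          (Set.range fun x : Fin m → ZMod q => ((f x, x) : ZMod h × (Fin m → ZMod q)))
          (q ^ m) h (q ^ m) (q ^ m / h)
        ∧ ∃ C : AddSubgroup (ZMod h × (Fin m → ZMod q)),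
            IsCompl ((⊤ : AddSubgroup (ZMod h)).prod (⊥ : AddSubgroup (Fin m → ZMod q))) C) := by
  have : NeZero h := ⟨hp.ne_zero⟩
  have hcard : Nat.card (Fin m → ZMod q) = q ^ m := by simp
  rw [isGBF_iff_diffCount_eq hp, isAddRDS_graph_iff, hcard, Nat.card_zmod]
  simp only [natCard_eq_diffCount, true_and]
  exact ⟨fun H => ⟨H, _, isCompl_prod_top_bot⟩, And.left⟩

/-- for `h` a prime dividing `q^m`, a map `f : ℤ_q^m → ℤ_h` is a GBF iff
`R = {(f(x),x) : x ∈ ℤ_q^m}` is a splitting `(q^m, h, q^m, q^m/h)`-relative difference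
set in `ℤ_h × ℤ_q^m` relative to the forbidden subgroup `ℤ_h × {0}`. -/
theorem isGBF_iff_splitting_RDS
    (q m h : ℕ) [NeZero q] (hq : 2 ≤ q) (hm : 1 ≤ m)
    (hp : Nat.Prime h) (hdvd : h ∣ q ^ m)
    (f : (Fin m → ZMod q) → ZMod h) :
    IsGBF q h f ↔
      (IsAddRDS ((⊤ : AddSubgroup (ZMod h)).prod (⊥ : AddSubgroup (Fin m → ZMod q)))
          (Set.range fun x : Fin m → ZMod q => ((f x, x) : ZMod h × (Fin m → ZMod q)))
          (q ^ m) h (q ^ m) (q ^ m / h)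
        ∧ ∃ C : AddSubgroup (ZMod h × (Fin m → ZMod q)),
            IsCompl ((⊤ : AddSubgroup (ZMod h)).prod (⊥ : AddSubgroup (Fin m → ZMod q))) C) :=
  isGBF_iff_splitting_RDS_general q m h hp f

end
end

section
/- Let h be a prime dividing Π_i s_i, and let φ: G → ℤ_h be a normalized h-ary (s_1,…,s_m)-array (φ(0) = 0). Then φ is a GPhA(s) of type z ≠ 0 if and only if the cocycle μ_z·∂φ ∈ Z²(G, ⟨ζ_h⟩) is orthogonal, i.e., M_{μ_z·∂φ} ∈ BH(Π_i s_i, h). -/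
open scoped BigOperators Pointwise

noncomputable section

/-- Periodic autocorrelation of a map `f : A → ℤ_h` at shift `w`. -/
def AC {A : Type*} [AddCommGroup A] [Fintype A] (h : ℕ) (f : A → ZMod h) (w : A) : ℂ :=
  ∑ g : A, zeta h ^ (f g - f (g + w)).val

/-- The expansion `φ' : E → ℤ_h` of type `z` of an `h`-ary array `φ`:
`φ'(g) = φ(g mod s) + Σ_i ⌊g_i / s_i⌋ (mod h)`. -/
def expand (m h : ℕ) (s z : Fin m → ℕ) (φ : (∀ i, ZMod (s i)) → ZMod h)
    (g : ∀ i, ZMod ((z i * (h - 1) + 1) * s i)) : ZMod h :=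
  φ (fun i => ((g i).val : ZMod (s i))) + ((∑ i, (g i).val / s i : ℕ) : ZMod h)

/-- The set `L ⊆ E`. -/
def LSet (m h : ℕ) (s z : Fin m → ℕ) :
    Set (∀ i, ZMod ((z i * (h - 1) + 1) * s i)) :=
  {g | ∀ i, s i ∣ (g i).val ∧ (z i = 0 → (g i).val = 0)}

private theorem cast_val_mod {n t : ℕ} (hd : t ∣ n) (X : ℕ) :
    ((X % n : ℕ) : ZMod t) = (X : ZMod t) := by
  conv_rhs => rw [← Nat.div_add_mod X n]
  push_cast
  rw [(ZMod.natCast_eq_zero_iff n t).2 hd]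
  ring

/-- `L` as a subgroup of `E`. -/
def Lsub (m h : ℕ) (s z : Fin m → ℕ)
    [∀ i, NeZero ((z i * (h - 1) + 1) * s i)] :
    AddSubgroup (∀ i, ZMod ((z i * (h - 1) + 1) * s i)) where
  carrier := LSet m h s z
  zero_mem' := by
    intro i
    simp [ZMod.val_zero]
  add_mem' := by
    rintro a b ha hb i
    obtain ⟨ha1, ha2⟩ := ha i
    obtain ⟨hb1, hb2⟩ := hb i
    have hval : ((a + b) i).val = ((a i).val + (b i).val) % ((z i * (h - 1) + 1) * s i) :=
      ZMod.val_add _ _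
    constructor
    · rw [hval]
      exact (Nat.dvd_mod_iff (dvd_mul_left _ _)).2 (Nat.dvd_add ha1 hb1)
    · intro hzi
      rw [hval, ha2 hzi, hb2 hzi]
      simp
  neg_mem' := by
    rintro a ha i
    obtain ⟨ha1, ha2⟩ := ha i
    have hval : ((-a) i).val
        = if a i = 0 then 0 else (z i * (h - 1) + 1) * s i - (a i).val :=
      ZMod.neg_val _
    constructor
    · rw [hval]
      split
      · exact dvd_zero _
      · exact Nat.dvd_sub (dvd_mul_left _ _) ha1
    · intro hzi
      rw [hval]
      have : a i = 0 := (ZMod.val_eq_zero _).1 (ha2 hzi)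
      simp [this]

/-- `K = {g ∈ L : Σ_i g_i/s_i ≡ 0 (mod h)}` as a subgroup of `E`. -/
def Ksub (m h : ℕ) (s z : Fin m → ℕ)
    [∀ i, NeZero ((z i * (h - 1) + 1) * s i)]
    (hh : 2 ≤ h) (hs : ∀ i, 1 < s i) (hz : ∀ i, z i ≤ 1) :
    AddSubgroup (∀ i, ZMod ((z i * (h - 1) + 1) * s i)) where
  carrier := {g | g ∈ LSet m h s z ∧ (h : ℕ) ∣ ∑ i, (g i).val / s i}
  zero_mem' := by
    refine ⟨(Lsub m h s z).zero_mem', ?_⟩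
    simp [ZMod.val_zero]
  add_mem' := by
    rintro a b ⟨haL, haS⟩ ⟨hbL, hbS⟩
    refine ⟨(Lsub m h s z).add_mem' haL hbL, ?_⟩
    rw [← ZMod.natCast_eq_zero_iff] at haS hbS ⊢
    rw [Nat.cast_sum] at haS hbS ⊢
    have key : ∀ i, ((((a + b) i).val / s i : ℕ) : ZMod h)
        = (((a i).val / s i : ℕ) : ZMod h) + (((b i).val / s i : ℕ) : ZMod h) := by
      intro i
      have hzi : z i = 0 ∨ z i = 1 := by have := hz i; omega
      have hval : ((a + b) i).val = ((a i).val + (b i).val) % ((z i * (h - 1) + 1) * s i) :=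
        ZMod.val_add _ _
      rcases hzi with h0 | h1
      · have ha0 := (haL i).2 h0
        have hb0 := (hbL i).2 h0
        rw [hval, ha0, hb0]
        simp
      · have hc : z i * (h - 1) + 1 = h := by rw [h1]; omega
        obtain ⟨α, hα⟩ := (haL i).1
        obtain ⟨β, hβ⟩ := (hbL i).1
        have hspos : 0 < s i := by have := hs i; omega
        rw [hval, Nat.mod_mul_left_div_self, hα, hβ, ← Nat.mul_add,
          Nat.mul_div_cancel_left _ hspos, Nat.mul_div_cancel_left _ hspos,
          Nat.mul_div_cancel_left _ hspos, hc, ZMod.natCast_mod, Nat.cast_add]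
    rw [Finset.sum_congr rfl fun i _ => key i, Finset.sum_add_distrib, haS, hbS, add_zero]
  neg_mem' := by
    rintro a ⟨haL, haS⟩
    refine ⟨(Lsub m h s z).neg_mem' haL, ?_⟩
    rw [← ZMod.natCast_eq_zero_iff] at haS ⊢
    rw [Nat.cast_sum] at haS ⊢
    have key : ∀ i, ((((-a) i).val / s i : ℕ) : ZMod h)
        = -(((a i).val / s i : ℕ) : ZMod h) := by
      intro i
      have hzi : z i = 0 ∨ z i = 1 := by have := hz i; omega
      have hval : ((-a) i).val
          = if a i = 0 then 0 else (z i * (h - 1) + 1) * s i - (a i).val :=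
        ZMod.neg_val _
      by_cases h0 : a i = 0
      · rw [hval, if_pos h0, h0]
        simp [ZMod.val_zero]
      · rcases hzi with hz0 | hz1
        · exact absurd ((ZMod.val_eq_zero _).1 ((haL i).2 hz0)) h0
        · have hc : z i * (h - 1) + 1 = h := by rw [hz1]; omega
          obtain ⟨α, hα⟩ := (haL i).1
          have hspos : 0 < s i := by have := hs i; omega
          have hlt : (a i).val < (z i * (h - 1) + 1) * s i := ZMod.val_lt _
          have hαle : α ≤ z i * (h - 1) + 1 := by
            rw [hα, mul_comm (z i * (h - 1) + 1) (s i)] at hlt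
            have := Nat.lt_of_mul_lt_mul_left hlt
            omega
          have hsub : (z i * (h - 1) + 1) * s i - (a i).val
              = s i * ((z i * (h - 1) + 1) - α) := by
            rw [hα, mul_comm (z i * (h - 1) + 1) (s i)]
            exact (Nat.mul_sub _ _ _).symm
          rw [hval, if_neg h0, hsub, Nat.mul_div_cancel_left _ hspos, hα,
            Nat.mul_div_cancel_left _ hspos, Nat.cast_sub hαle, hc]
          simp
    rw [Finset.sum_congr rfl fun i _ => key i, Finset.sum_neg_distrib, haS, neg_zero]

/-- The reduction-mod-`s` homomorphism `E →+ G`. -/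
def resHom (m h : ℕ) (s z : Fin m → ℕ)
    [∀ i, NeZero ((z i * (h - 1) + 1) * s i)] :
    (∀ i, ZMod ((z i * (h - 1) + 1) * s i)) →+ (∀ i, ZMod (s i)) where
  toFun g i := ((g i).val : ZMod (s i))
  map_zero' := by
    funext i
    simp [ZMod.val_zero]
  map_add' a b := by
    funext i
    show (((a i + b i)).val : ZMod (s i)) = ((a i).val : ZMod (s i)) + ((b i).val : ZMod (s i))
    rw [ZMod.val_add, cast_val_mod (dvd_mul_left _ _), Nat.cast_add]

/-- The homomorphism `β : E/K → G` induced by reduction mod `s`. -/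
def betaHom (m h : ℕ) (s z : Fin m → ℕ)
    [∀ i, NeZero ((z i * (h - 1) + 1) * s i)]
    (hh : 2 ≤ h) (hs : ∀ i, 1 < s i) (hz : ∀ i, z i ≤ 1) :
    (∀ i, ZMod ((z i * (h - 1) + 1) * s i)) ⧸ Ksub m h s z hh hs hz →+ (∀ i, ZMod (s i)) :=
  QuotientAddGroup.lift (Ksub m h s z hh hs hz) (resHom m h s z) (by
    intro g hg
    funext i
    exact (ZMod.natCast_eq_zero_iff _ _).2 ((hg.1 i).1))

/-- The transversal map `τ : G → E/K`, `τ(x) = x + K`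
(embedding `x` with representatives `0 ≤ x_i < s_i`). -/
def tau (m h : ℕ) (s z : Fin m → ℕ)
    [∀ i, NeZero ((z i * (h - 1) + 1) * s i)]
    (hh : 2 ≤ h) (hs : ∀ i, 1 < s i) (hz : ∀ i, z i ≤ 1)
    (x : ∀ i, ZMod (s i)) :
    (∀ i, ZMod ((z i * (h - 1) + 1) * s i)) ⧸ Ksub m h s z hh hs hz :=
  QuotientAddGroup.mk (fun i => (((x i).val : ℕ) : ZMod ((z i * (h - 1) + 1) * s i)))

/-- The injection `ι : ⟨ζ_h⟩ ≅ ℤ_h → E/K`, sending `ζ_h^j` to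
`j • ((0,…,0,s_{i₀},0,…,0) + K)` for the fixed index `i₀` with `z i₀ = 1`. -/
def iota (m h : ℕ) (s z : Fin m → ℕ)
    [∀ i, NeZero ((z i * (h - 1) + 1) * s i)]
    (hh : 2 ≤ h) (hs : ∀ i, 1 < s i) (hz : ∀ i, z i ≤ 1)
    (i₀ : Fin m) (j : ZMod h) :
    (∀ i, ZMod ((z i * (h - 1) + 1) * s i)) ⧸ Ksub m h s z hh hs hz :=
  j.val • (QuotientAddGroup.mk
    (Pi.single i₀ ((s i₀ : ℕ) : ZMod ((z i₀ * (h - 1) + 1) * s i₀))))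

/-- A Butson Hadamard matrix in `BH(n,k)`. -/
def IsBH {ι : Type*} [Fintype ι] [DecidableEq ι] (n k : ℕ) (M : Matrix ι ι ℂ) : Prop :=
  Fintype.card ι = n ∧ (∀ a b, ∃ j : ℕ, M a b = zeta k ^ j) ∧
    M * M.conjTranspose = (n : ℂ) • (1 : Matrix ι ι ℂ)

end

/-- The cocycle `μ_z` in exponent form:
`μ_z(x,y) = ζ_h^{Σ_{i : z i = 1} ⌊(x_i+y_i)/s_i⌋}`. -/
def muexp (m h : ℕ) (s z : Fin m → ℕ) (x y : ∀ i, ZMod (s i)) : ZMod h :=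
  ((∑ i, if z i = 1 then ((x i).val + (y i).val) / s i else 0 : ℕ) : ZMod h)

/-- The cocycle `ψ = μ_z·∂φ` in exponent form, i.e.
`ψ(x,y) = μ_z(x,y)·ζ_h^{φ(x+y)-φ(x)-φ(y)}`. -/
def psiexp (m h : ℕ) (s z : Fin m → ℕ) (φ : (∀ i, ZMod (s i)) → ZMod h)
    (x y : ∀ i, ZMod (s i)) : ZMod h :=
  muexp m h s z x y + (φ (x + y) - φ x - φ y)

/-!
Write `χ` for the standard character `ℤ_h → ℂ`, `j ↦ ζ_h^j`, and `ψ = μ_z·∂φ`. Every entry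
`(a, a')` of `M_ψ M_ψ*` is, by the cocycle identity, a root of unity times the row sum
`S(a - a') = Σ_b χ(ψ(a - a', b))`, so `M_ψ ∈ BH` iff `S(w) = 0` for all `w ≠ 0`.
On the other side, reduction mod `s` is a surjection `r : E → G` whose kernel is `L`, and
the carries of `E` are governed by `μ_z`:
`φ'(g) - φ'(g + w) = -(ψ(r w, r g) + φ'(w))`. Summing over `g` gives
`AC_{φ'}(w) = (root of unity) · |ker r| · conj S(r w)`, so `AC_{φ'}` vanishes off `L` iff
`S` vanishes off `0`.
-/

open Finset ComplexConjugate
open scoped Matrix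

theorem zeta_pow_val {h : ℕ} [NeZero h] (x : ZMod h) :
    zeta h ^ x.val = ZMod.stdAddChar x := by
  rw [ZMod.stdAddChar_apply, ZMod.toCircle_apply, zeta, ← Complex.exp_nat_mul]
  ring_nf

theorem ZMod.stdAddChar_ne_zero {h : ℕ} [NeZero h] (x : ZMod h) : ZMod.stdAddChar x ≠ 0 :=
  Circle.coe_ne_zero _

section CocycleMatrix

variable {G : Type*} [AddCommGroup G]

/-- Additive, trivial-action form of `groupCohomology.IsCocycle₂`. -/
def IsAddTwoCocycle {A : Type*} [AddCommGroup A] (ψ : G → G → A) : Prop :=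
  ∀ a b c, ψ a b + ψ (a + b) c = ψ a (b + c) + ψ b c

theorem IsAddTwoCocycle.apply_zero_left {A : Type*} [AddCommGroup A] {ψ : G → G → A}
    (hψ : IsAddTwoCocycle ψ) (b : G) : ψ 0 b = ψ 0 0 := by
  have h := hψ 0 0 b
  rw [zero_add, zero_add] at h
  exact (add_right_cancel h).symm

variable [Fintype G] {h : ℕ} [NeZero h] {ψ : G → G → ZMod h}

noncomputable def cocycleMatrix (h : ℕ) (ψ : G → G → ZMod h) : Matrix G G ℂ :=
  Matrix.of fun a b => zeta h ^ (ψ a b).val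

theorem cocycleMatrix_mul_conjTranspose_apply (hψ : IsAddTwoCocycle ψ) (a a' : G) :
    (cocycleMatrix h ψ * (cocycleMatrix h ψ)ᴴ) a a' =
      ZMod.stdAddChar (-ψ (a - a') a') * ∑ b, ZMod.stdAddChar (ψ (a - a') b) := by
  simp only [Matrix.mul_apply, Matrix.conjTranspose_apply, cocycleMatrix, Matrix.of_apply,
    zeta_pow_val, Complex.star_def, ← AddChar.map_neg_eq_conj, ← AddChar.map_add_eq_mul,
    Finset.mul_sum]
  conv_rhs => rw [← Equiv.sum_comp (Equiv.addLeft a')]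
  refine sum_congr rfl fun b _ => congrArg _ ?_
  have h := hψ (a - a') a' b
  rw [sub_add_cancel] at h
  simp only [Equiv.coe_addLeft]
  linear_combination h

theorem isBH_cocycleMatrix_iff [DecidableEq G] (hψ : IsAddTwoCocycle ψ) :
    IsBH (Fintype.card G) h (cocycleMatrix h ψ) ↔
      ∀ w ≠ 0, ∑ b, ZMod.stdAddChar (ψ w b) = 0 := by
  have hroots : ∀ a b, ∃ j : ℕ, cocycleMatrix h ψ a b = zeta h ^ j := fun a b => ⟨_, rfl⟩
  simp only [IsBH, hroots, implies_true, true_and, ← Matrix.ext_iff,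
    cocycleMatrix_mul_conjTranspose_apply hψ, Matrix.smul_apply, Matrix.one_apply, smul_eq_mul]
  constructor
  · intro hM w hw
    simpa [hw, ZMod.stdAddChar_ne_zero] using hM w 0
  · intro hS a a'
    by_cases haa' : a = a'
    · subst haa'
      simp only [sub_self, hψ.apply_zero_left, sum_const, card_univ, nsmul_eq_mul, if_true]
      rw [mul_left_comm, ← AddChar.map_add_eq_mul, neg_add_cancel, AddChar.map_zero_eq_one,
        mul_one]
    · simp [haa', hS _ (sub_ne_zero.2 haa')]

end CocycleMatrix

section Autocorrelation

variable {E G : Type*} [AddCommGroup E] [Fintype E] [AddCommGroup G] [Fintype G]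

theorem AddMonoidHom.sum_comp_of_surjective {M : Type*} [AddCommMonoid M] [DecidableEq G]
    (r : E →+ G) (hr : Function.Surjective r) (F : G → M) :
    ∑ g, F (r g) = #{g | r g = 0} • ∑ b, F b := by
  rw [← sum_fiberwise univ r, smul_sum]
  refine sum_congr rfl fun b _ => ?_
  rw [sum_congr rfl fun g hg => by rw [(mem_filter.1 hg).2], sum_const,
    AddMonoidHom.card_fiber_eq_of_mem_range r (hr b) ⟨0, map_zero r⟩]

theorem AC_eq_zero_iff_of_sub_eq {h : ℕ} [NeZero h] (r : E →+ G) (hr : Function.Surjective r)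
    (f : E → ZMod h) (ψ : G → G → ZMod h)
    (hf : ∀ g w, f g - f (g + w) = -(ψ (r w) (r g) + f w)) (w : E) :
    AC h f w = 0 ↔ ∑ b, ZMod.stdAddChar (ψ (r w) b) = 0 := by
  classical
  have hAC : AC h f w = (#{g | r g = 0} • conj (∑ b, ZMod.stdAddChar (ψ (r w) b))) *
      conj (ZMod.stdAddChar (f w)) := by
    simp only [AC, zeta_pow_val, hf, AddChar.map_neg_eq_conj, AddChar.map_add_eq_mul, map_mul,
      ← sum_mul, map_sum]
    rw [r.sum_comp_of_surjective hr fun b => conj (ZMod.stdAddChar (ψ (r w) b))]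
  have hker : #{g | r g = 0} ≠ 0 := card_ne_zero.2 ⟨0, by simp⟩
  rw [hAC, mul_eq_zero, smul_eq_zero, map_eq_zero]
  simp [hker, ZMod.stdAddChar_ne_zero]

end Autocorrelation

theorem Nat.add_div_eq_div_add_div_add_mod_add_mod_div (a b s : ℕ) (hs : 0 < s) :
    (a + b) / s = a / s + b / s + (a % s + b % s) / s := by
  conv_lhs => rw [← Nat.div_add_mod a s, ← Nat.div_add_mod b s]
  rw [show s * (a / s) + a % s + (s * (b / s) + b % s) = s * (a / s + b / s) + (a % s + b % s) by
    ring, Nat.mul_add_div hs]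

theorem natCast_val_add_div {h s z : ℕ} [NeZero h] [NeZero s] [NeZero ((z * (h - 1) + 1) * s)]
    (hz : z ≤ 1) (a b : ZMod ((z * (h - 1) + 1) * s)) :
    (((a + b).val / s : ℕ) : ZMod h) =
      ((a.val / s : ℕ) : ZMod h) + ((b.val / s : ℕ) : ZMod h) +
        ((if z = 1 then ((a.val : ZMod s).val + (b.val : ZMod s).val) / s else 0 : ℕ) :
          ZMod h) := by
  have hs : 0 < s := NeZero.pos s
  rw [ZMod.val_add, ZMod.val_natCast, ZMod.val_natCast]
  obtain rfl | rfl : z = 0 ∨ z = 1 := by omega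
  · have hN : (0 * (h - 1) + 1) * s = s := by ring
    have ha : a.val < s := lt_of_lt_of_eq a.val_lt hN
    have hb : b.val < s := lt_of_lt_of_eq b.val_lt hN
    generalize a.val = A at ha ⊢
    generalize b.val = B at hb ⊢
    simp [Nat.div_eq_of_lt, Nat.mod_lt, ha, hb, hs]
  · have hN : (1 * (h - 1) + 1) * s = h * s := by
      rw [one_mul, Nat.sub_add_cancel (NeZero.one_le)]
    generalize a.val = A
    generalize b.val = B
    rw [hN, Nat.mod_mul_left_div_self, ZMod.natCast_mod, if_pos rfl, ← Nat.cast_add,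
      ← Nat.cast_add, Nat.add_div_eq_div_add_div_add_mod_add_mod_div _ _ _ hs]

section Expansion

variable {m h : ℕ} {s z : Fin m → ℕ}

theorem resHom_apply [∀ i, NeZero ((z i * (h - 1) + 1) * s i)]
    (g : ∀ i, ZMod ((z i * (h - 1) + 1) * s i)) (i : Fin m) :
    resHom m h s z g i = ((g i).val : ZMod (s i)) :=
  rfl

theorem resHom_surjective [∀ i, NeZero ((z i * (h - 1) + 1) * s i)] [∀ i, NeZero (s i)] :
    Function.Surjective (resHom m h s z) := by
  intro x
  refine ⟨fun i => ((x i).val : ZMod ((z i * (h - 1) + 1) * s i)), funext fun i => ?_⟩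
  rw [resHom_apply, ZMod.val_natCast, Nat.mod_eq_of_lt, ZMod.natCast_zmod_val]
  exact (x i).val_lt.trans_le (Nat.le_mul_of_pos_left _ (Nat.succ_pos _))

theorem mem_LSet_iff_resHom_eq_zero [∀ i, NeZero ((z i * (h - 1) + 1) * s i)]
    (g : ∀ i, ZMod ((z i * (h - 1) + 1) * s i)) :
    g ∈ LSet m h s z ↔ resHom m h s z g = 0 := by
  simp only [LSet, Set.mem_ofPred_eq, funext_iff, resHom_apply, Pi.zero_apply,
    ZMod.natCast_eq_zero_iff]
  refine forall_congr' fun i => ⟨And.left, fun hdvd => ⟨hdvd, fun hzi => ?_⟩⟩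
  have hN : (z i * (h - 1) + 1) * s i = s i := by rw [hzi]; ring
  exact Nat.eq_zero_of_dvd_of_lt hdvd (lt_of_lt_of_eq (g i).val_lt hN)

theorem natCast_sum_val_add_div [∀ i, NeZero ((z i * (h - 1) + 1) * s i)]
    [∀ i, NeZero (s i)] [NeZero h] (hz : ∀ i, z i ≤ 1)
    (g w : ∀ i, ZMod ((z i * (h - 1) + 1) * s i)) :
    ((∑ i, ((g + w) i).val / s i : ℕ) : ZMod h) =
      ((∑ i, (g i).val / s i : ℕ) : ZMod h) + ((∑ i, (w i).val / s i : ℕ) : ZMod h) +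
        muexp m h s z (resHom m h s z g) (resHom m h s z w) := by
  simp only [muexp, Nat.cast_sum, ← sum_add_distrib, resHom_apply]
  exact sum_congr rfl fun i _ => natCast_val_add_div (hz i) (g i) (w i)

theorem muexp_comm (x y : ∀ i, ZMod (s i)) : muexp m h s z x y = muexp m h s z y x := by
  simp only [muexp, add_comm (x _).val]

/-- `μ_z` is the coboundary of the carry map of `E`, pulled back along `E → G`. -/
theorem isAddTwoCocycle_muexp [∀ i, NeZero (s i)] [NeZero h] (hz : ∀ i, z i ≤ 1) :
    IsAddTwoCocycle (muexp m h s z) := by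
  have : ∀ i, NeZero ((z i * (h - 1) + 1) * s i) :=
    fun i => ⟨Nat.mul_ne_zero (Nat.succ_ne_zero _) (NeZero.ne _)⟩
  have hr : Function.Surjective (resHom m h s z) := resHom_surjective
  intro a b c
  obtain ⟨g, rfl⟩ := hr a
  obtain ⟨w, rfl⟩ := hr b
  obtain ⟨v, rfl⟩ := hr c
  have hgw := natCast_sum_val_add_div hz g w
  have hgwv := natCast_sum_val_add_div hz (g + w) v
  have hwv := natCast_sum_val_add_div hz w v
  have hgwv' := natCast_sum_val_add_div hz g (w + v)
  rw [add_assoc] at hgwv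
  rw [← map_add, ← map_add]
  linear_combination hgwv' + hwv - hgw - hgwv

theorem isAddTwoCocycle_psiexp [∀ i, NeZero (s i)] [NeZero h] (hz : ∀ i, z i ≤ 1)
    (φ : (∀ i, ZMod (s i)) → ZMod h) :
    IsAddTwoCocycle (psiexp m h s z φ) := by
  intro a b c
  have hμ := (isAddTwoCocycle_muexp hz : IsAddTwoCocycle (muexp m h s z)) a b c
  simp only [psiexp, add_assoc]
  linear_combination hμ

theorem expand_apply [∀ i, NeZero ((z i * (h - 1) + 1) * s i)] (φ : (∀ i, ZMod (s i)) → ZMod h)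
    (g : ∀ i, ZMod ((z i * (h - 1) + 1) * s i)) :
    expand m h s z φ g = φ (resHom m h s z g) + ((∑ i, (g i).val / s i : ℕ) : ZMod h) :=
  rfl

theorem expand_sub_expand_add [∀ i, NeZero ((z i * (h - 1) + 1) * s i)]
    [∀ i, NeZero (s i)] [NeZero h] (hz : ∀ i, z i ≤ 1) (φ : (∀ i, ZMod (s i)) → ZMod h)
    (g w : ∀ i, ZMod ((z i * (h - 1) + 1) * s i)) :
    expand m h s z φ g - expand m h s z φ (g + w) =
      -(psiexp m h s z φ (resHom m h s z w) (resHom m h s z g) + expand m h s z φ w) := by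
  rw [expand_apply, expand_apply, expand_apply, natCast_sum_val_add_div hz, map_add, psiexp,
    muexp_comm, add_comm (resHom m h s z w)]
  ring

end Expansion

theorem GPhA_iff_orthogonal_general
    (m h : ℕ) (s z : Fin m → ℕ)
    [∀ i, NeZero ((z i * (h - 1) + 1) * s i)] [∀ i, NeZero (s i)]
    (hh : 2 ≤ h) (hz : ∀ i, z i ≤ 1)
    (φ : (∀ i, ZMod (s i)) → ZMod h) :
    (∀ g, g ∉ LSet m h s z → AC h (expand m h s z φ) g = 0) ↔
      IsBH (∏ i, s i) h
        (Matrix.of fun a b : ∀ i, ZMod (s i) =>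
          zeta h ^ (psiexp m h s z φ a b).val) := by
  have : NeZero h := ⟨by omega⟩
  have hr : Function.Surjective (resHom m h s z) := resHom_surjective
  have hcard : Fintype.card (∀ i, ZMod (s i)) = ∏ i, s i := by simp
  rw [← hcard, ← cocycleMatrix, isBH_cocycleMatrix_iff (isAddTwoCocycle_psiexp hz φ)]
  simp only [mem_LSet_iff_resHom_eq_zero,
    AC_eq_zero_iff_of_sub_eq _ hr _ _ (expand_sub_expand_add hz φ)]
  exact (hr.forall (p := fun w => w ≠ 0 → ∑ b, ZMod.stdAddChar (psiexp m h s z φ w b) = 0)).symm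

/-- for `h` a prime dividing `Π_i s_i` and a normalized array
`φ : G → ℤ_h`, `φ` is a `GPhA(s)` of type `z ≠ 0` iff the cocycle `μ_z·∂φ` is
orthogonal, i.e. `M_{μ_z·∂φ} ∈ BH(Π_i s_i, h)`. -/
theorem GPhA_iff_orthogonal
    (m h : ℕ) (s z : Fin m → ℕ)
    [∀ i, NeZero ((z i * (h - 1) + 1) * s i)] [∀ i, NeZero (s i)]
    (hh : 2 ≤ h) (hs : ∀ i, 1 < s i) (hz : ∀ i, z i ≤ 1)
    (hp : Nat.Prime h) (hdvd : h ∣ ∏ i, s i) (hz0 : ∃ i, z i = 1)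
    (φ : (∀ i, ZMod (s i)) → ZMod h) (hφ0 : φ 0 = 0) :
    (∀ g, g ∉ LSet m h s z → AC h (expand m h s z φ) g = 0) ↔
      IsBH (∏ i, s i) h
        (Matrix.of fun a b : ∀ i, ZMod (s i) =>
          zeta h ^ (psiexp m h s z φ a b).val) :=
  GPhA_iff_orthogonal_general m h s z hh hz φ
end
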